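/- arXiv:2212.10582 — 3 statements merged into one kernel-verified Lean document; each statement's English description precedes it below -/
import Mathlib

section
/- Any k-regular simple graph on n vertices has a vertex cover of size at most n·k/(k+1). -/
/-- Any `k`-regular simple graph on `n` vertices (`k ≥ 1`) has a vertex cover of
size at most `n * k / (k + 1)`, stated multiplicatively as
`|S| * (k + 1) ≤ n * k`. -/
theorem regular_vertex_cover
    {V : Type*} [Fintype V] [DecidableEq V] (G : SimpleGraph V) [DecidableRel G.Adj]
    (k : ℕ) (hk : 1 ≤ k) (h : G.IsRegularOfDegree k) :
    ∃ S : Finset V, (∀ v w, G.Adj v w → v ∈ S ∨ w ∈ S) ∧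
      S.card * (k + 1) ≤ Fintype.card V * k := by
  classical
  -- independent finsets
  set P : Finset (Finset V) :=
    Finset.univ.powerset.filter (fun s => ∀ a ∈ s, ∀ b ∈ s, ¬ G.Adj a b) with hP
  have hne : P.Nonempty := ⟨∅, by simp [hP]⟩
  obtain ⟨I, hIP, hImax⟩ := P.exists_max_image Finset.card hne
  have hIind : ∀ a ∈ I, ∀ b ∈ I, ¬ G.Adj a b := by
    have := (Finset.mem_filter.mp hIP).2
    exact this
  -- every vertex is in I or adjacent to a vertex of I
  have hdom : ∀ u : V, u ∈ I ∨ ∃ a ∈ I, G.Adj a u := by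
    intro u
    by_contra hcon
    push_neg at hcon
    obtain ⟨huI, hadj⟩ := hcon
    have hind' : ∀ a ∈ insert u I, ∀ b ∈ insert u I, ¬ G.Adj a b := by
      intro a ha b hb
      simp only [Finset.mem_insert] at ha hb
      rcases ha with rfl | ha <;> rcases hb with rfl | hb
      · exact G.loopless.irrefl _
      · intro hab; exact hadj b hb (hab.symm)
      · intro hab; exact hadj a ha hab
      · exact hIind a ha b hb
    have hmem : insert u I ∈ P := by
      simp only [hP, Finset.mem_filter, Finset.mem_powerset]
      exact ⟨Finset.subset_univ _, hind'⟩
    have := hImax _ hmem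
    have hlt : I.card < (insert u I).card := by
      rw [Finset.card_insert_of_notMem huI]; omega
    omega
  -- cardinality bound: n ≤ |I| * (k+1)
  have hsub : (Finset.univ : Finset V) ⊆ I ∪ I.biUnion (fun a => G.neighborFinset a) := by
    intro u _
    rcases hdom u with hu | ⟨a, ha, hau⟩
    · exact Finset.mem_union_left _ hu
    · exact Finset.mem_union_right _ (Finset.mem_biUnion.mpr ⟨a, ha, by
        simpa [SimpleGraph.mem_neighborFinset] using hau⟩)
  have hn : Fintype.card V ≤ I.card * (k + 1) := by
    have h1 : Fintype.card V ≤ (I ∪ I.biUnion (fun a => G.neighborFinset a)).card := by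
      rw [← Finset.card_univ]; exact Finset.card_le_card hsub
    have h2 : (I ∪ I.biUnion (fun a => G.neighborFinset a)).card ≤
        I.card + I.card * k := by
      refine le_trans (Finset.card_union_le _ _) ?_
      have h3 : (I.biUnion (fun a => G.neighborFinset a)).card ≤ I.card * k := by
        refine le_trans (Finset.card_biUnion_le) ?_
        have : ∀ a ∈ I, (G.neighborFinset a).card = k := by
          intro a _; exact h a
        calc ∑ a ∈ I, (G.neighborFinset a).card = ∑ a ∈ I, k :=
              Finset.sum_congr rfl this
          _ = I.card * k := by rw [Finset.sum_const, smul_eq_mul]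
          _ ≤ I.card * k := le_rfl
      omega
    calc Fintype.card V ≤ _ := h1
      _ ≤ I.card + I.card * k := h2
      _ = I.card * (k + 1) := by ring
  refine ⟨Iᶜ, ?_, ?_⟩
  · intro v w hvw
    by_contra hc
    push_neg at hc
    simp only [Finset.mem_compl, not_not] at hc
    exact hIind v hc.1 w hc.2 hvw
  · have hcard : Iᶜ.card + I.card = Fintype.card V := by
      rw [Finset.card_compl]; have := Finset.card_le_univ I; omega
    have : Iᶜ.card * (k + 1) + I.card * (k + 1) = Fintype.card V * (k + 1) := by
      rw [← add_mul, hcard]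
    nlinarith [hn, this]
end

section
/- For every n ≥ 1 and every 0 ≤ k ≤ n - 1 with n·k even, there exists a k-regular simple graph on n vertices. -/
private lemma aux_mod_val {n a c : ℕ} (ha : a < n) (hc : c < n) :
    (a + n - c) % n = if c ≤ a then a - c else a + n - c := by
  split
  · have h1 : a + n - c = (a - c) + n := by omega
    rw [h1, Nat.add_mod_right, Nat.mod_eq_of_lt (by omega)]
  · exact Nat.mod_eq_of_lt (by omega)

private lemma aux_mod_symm {n a b : ℕ} (ha : a < n) (hb : b < n) (hne : a ≠ b) :
    (a + n - b) % n = n - (b + n - a) % n := by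
  rw [aux_mod_val ha hb, aux_mod_val hb ha]
  split_ifs <;> omega

private lemma aux_mod_inj {n a b c : ℕ} (ha : a < n) (hb : b < n) (hc : c < n)
    (h : (a + n - c) % n = (b + n - c) % n) : a = b := by
  rw [aux_mod_val ha hc, aux_mod_val hb hc] at h
  split_ifs at h <;> omega

/-- For every `n ≥ 1` and `0 ≤ k ≤ n - 1` with `n * k` even, there exists a
`k`-regular simple graph on `n` vertices. -/
theorem exists_regular_graph
    (n k : ℕ) (hn : 1 ≤ n) (hk : k ≤ n - 1) (hpar : Even (n * k)) :
    ∃ (G : SimpleGraph (Fin n)) (_ : DecidableRel G.Adj),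
      G.IsRegularOfDegree k := by
  have hkn : k < n := by omega
  have hpar' : k % 2 = 1 → n % 2 = 0 := by
    rw [Nat.even_mul, Nat.even_iff, Nat.even_iff] at hpar
    omega
  set m := k / 2 with hm
  set T : Finset ℕ :=
    (Finset.Icc 1 m ∪ Finset.Icc (n - m) (n - 1)) ∪ (if k % 2 = 1 then {n / 2} else ∅) with hT
  have hmemT : ∀ d, d ∈ T ↔
      (1 ≤ d ∧ d ≤ m) ∨ (n - m ≤ d ∧ d ≤ n - 1) ∨ (k % 2 = 1 ∧ d = n / 2) := by
    intro d
    by_cases h : k % 2 = 1 <;>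
      simp [hT, Finset.mem_Icc, h] <;> tauto
  have hTbound : ∀ d ∈ T, 1 ≤ d ∧ d ≤ n - 1 := by
    intro d hd
    rw [hmemT] at hd
    omega
  have hTsymm : ∀ d ∈ T, n - d ∈ T := by
    intro d hd
    rw [hmemT] at hd ⊢
    omega
  have hTcard : T.card = k := by
    have hd1 : Disjoint (Finset.Icc 1 m) (Finset.Icc (n - m) (n - 1)) := by
      rw [Finset.disjoint_left]
      intro a
      simp only [Finset.mem_Icc]
      omega
    have hc1 : (Finset.Icc 1 m ∪ Finset.Icc (n - m) (n - 1)).card = 2 * m := by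
      rw [Finset.card_union_of_disjoint hd1, Nat.card_Icc, Nat.card_Icc]
      omega
    by_cases h : k % 2 = 1
    · have hd2 : n / 2 ∉ Finset.Icc 1 m ∪ Finset.Icc (n - m) (n - 1) := by
        simp only [Finset.mem_union, Finset.mem_Icc]
        omega
      rw [hT, if_pos h,
        Finset.card_union_of_disjoint (Finset.disjoint_singleton_right.mpr hd2),
        Finset.card_singleton, hc1]
      omega
    · rw [hT, if_neg h, Finset.union_empty, hc1]
      omega
  let G : SimpleGraph (Fin n) :=
    { Adj := fun u v => u ≠ v ∧ ((v : ℕ) + n - (u : ℕ)) % n ∈ T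
      symm := ⟨by
        rintro u v ⟨hne, hd⟩
        refine ⟨hne.symm, ?_⟩
        have hval : (u : ℕ) ≠ (v : ℕ) := fun h => hne (Fin.ext h)
        rw [aux_mod_symm u.isLt v.isLt hval]
        exact hTsymm _ hd⟩
      loopless := ⟨fun v h => h.1 rfl⟩ }
  refine ⟨G, fun u v =>
    inferInstanceAs (Decidable (u ≠ v ∧ ((v : ℕ) + n - (u : ℕ)) % n ∈ T)), ?_⟩
  intro v
  show (G.neighborFinset v).card = k
  rw [← hTcard]
  refine Finset.card_bij (fun w _ => ((w : ℕ) + n - (v : ℕ)) % n) ?_ ?_ ?_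
  · intro w hw
    rw [SimpleGraph.mem_neighborFinset] at hw
    exact hw.2
  · intro w1 h1 w2 h2 h
    exact Fin.ext (aux_mod_inj w1.isLt w2.isLt v.isLt h)
  · intro d hd
    obtain ⟨hd1, hd2⟩ := hTbound d hd
    have hv := v.isLt
    have key : ((((v : ℕ) + d) % n) + n - (v : ℕ)) % n = d := by
      have hmod : ((v : ℕ) + d) % n = if (v : ℕ) + d < n then (v : ℕ) + d
          else (v : ℕ) + d - n := by
        split
        · exact Nat.mod_eq_of_lt (by omega)
        · rw [Nat.mod_eq_sub_mod (by omega), Nat.mod_eq_of_lt (by omega)]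
      rw [hmod]
      split_ifs with h
      · rw [aux_mod_val (by omega) hv]
        split_ifs <;> omega
      · rw [aux_mod_val (by omega) hv]
        split_ifs <;> omega
    refine ⟨⟨((v : ℕ) + d) % n, Nat.mod_lt _ (by omega)⟩, ?_, key⟩
    rw [SimpleGraph.mem_neighborFinset]
    constructor
    · intro heq
      have h2 := key
      have h4 : (v : ℕ) = ((v : ℕ) + d) % n := congrArg Fin.val heq
      rw [← h4] at h2
      have h3 : (v : ℕ) + n - (v : ℕ) = n := by omega
      rw [h3, Nat.mod_self] at h2
      omega
    · show ((((v : ℕ) + d) % n) + n - (v : ℕ)) % n ∈ T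
      rw [key]
      exact hd
end

section
/- For an n-qubit graph state |G⟩ of a simple graph G and a bipartition (A, B) of the vertices, the Schmidt rank of |G⟩ across (A, B) equals 2^r, where r is the rank over GF(2) of the submatrix of the adjacency matrix of G with rows indexed by A and columns indexed by B. -/
open Finset

/-- The amplitude `⟨x|G⟩` of the graph state of `G`: applying `CZ` for each
edge of `G` to `|+⟩^{⊗n}` gives the state with amplitudes
`2^{-n/2} · ∏_{(i,j) ∈ E} (-1)^{x_i x_j}`. -/
noncomputable def graphStateAmp {V : Type*} [Fintype V] [DecidableEq V]
    (G : SimpleGraph V) [DecidableRel G.Adj] (x : V → Bool) : ℂ :=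
  ((Real.sqrt 2)⁻¹ : ℂ) ^ (Fintype.card V) *
    ∏ e ∈ G.edgeFinset,
      Sym2.lift ⟨fun i j => if x i = true ∧ x j = true then (-1 : ℂ) else 1,
        by intro i j; simp [and_comm]⟩ e

set_option linter.unusedSectionVars false

namespace GraphStateRankProof

open Matrix

def tz : Bool → ZMod 2 := fun x => if x then 1 else 0
def zb : ZMod 2 → Bool := fun x => x = 1
lemma zb_tz (x : Bool) : zb (tz x) = x := by cases x <;> rfl
lemma tz_zb (x : ZMod 2) : tz (zb x) = x := by revert x; decide
lemma tz_not (x : Bool) : tz (!x) = tz x + 1 := by revert x; decide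
lemma tz_add_tz_of_ne {x y : Bool} (h : x ≠ y) : tz x + tz y = 1 := by
  revert h; revert x y; decide
noncomputable def χ : ZMod 2 → ℂ := fun x => if x = 0 then 1 else -1
lemma χ_zero : χ 0 = 1 := rfl
lemma χ_one : χ 1 = -1 := by simp [χ]
lemma χ_add (x y : ZMod 2) : χ (x + y) = χ x * χ y := by
  rcases (by decide : ∀ z : ZMod 2, z = 0 ∨ z = 1) x with rfl | rfl <;>
    rcases (by decide : ∀ z : ZMod 2, z = 0 ∨ z = 1) y with rfl | rfl <;>
    simp [χ, show (1:ZMod 2)+1 = 0 from rfl]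
lemma χ_sum {α : Type*} (s : Finset α) (f : α → ZMod 2) :
    χ (∑ i ∈ s, f i) = ∏ i ∈ s, χ (f i) := by
  induction s using Finset.cons_induction with
  | empty => simp [χ_zero]
  | cons a s ha ih => rw [Finset.sum_cons, Finset.prod_cons, χ_add, ih]

variable {V₁ V₂ : Type*} [Fintype V₁] [Fintype V₂] [DecidableEq V₁] [DecidableEq V₂]

noncomputable def Hmat (V₁ : Type*) [Fintype V₁] : Matrix (V₁ → Bool) (V₁ → Bool) ℂ :=
  Matrix.of fun a u => χ ((fun i => tz (a i)) ⬝ᵥ (fun i => tz (u i)))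

noncomputable def Pmat (C : Matrix V₁ V₂ (ZMod 2)) : Matrix (V₁ → Bool) (V₂ → Bool) ℂ :=
  Matrix.of fun u b => if (fun i => tz (u i)) = C.mulVec (fun j => tz (b j)) then 1 else 0

lemma HP (C : Matrix V₁ V₂ (ZMod 2)) :
    Hmat V₁ * Pmat C = Matrix.of fun a b =>
      χ ((fun i => tz (a i)) ⬝ᵥ C.mulVec (fun j => tz (b j))) := by
  ext a b
  set w : V₁ → ZMod 2 := C.mulVec (fun j => tz (b j)) with hw
  have hu₀ : (fun i => tz ((fun k => zb (w k)) i)) = w := funext fun i => tz_zb (w i)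
  rw [Matrix.mul_apply]
  rw [Finset.sum_eq_single (fun k => zb (w k))]
  · simp [Hmat, Pmat, hu₀, hw, tz_zb]
  · intro u _ hne
    simp only [Hmat, Pmat, Matrix.of_apply]
    rw [if_neg, mul_zero]
    intro hcontra
    exact hne (funext fun k => by
      have := congrFun hcontra k
      simpa [zb_tz] using congrArg zb this)
  · intro h; exact absurd (Finset.mem_univ _) h

lemma sum_χ_eq_zero (v : V₁ → ZMod 2) (i : V₁) (hv : v i = 1) :
    ∑ u : V₁ → Bool, χ (v ⬝ᵥ (fun k => tz (u k))) = 0 := by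
  have key : ∀ u : V₁ → Bool,
      v ⬝ᵥ (fun k => tz (Function.update u i (!u i) k)) = v ⬝ᵥ (fun k => tz (u k)) + 1 := by
    intro u
    have hupd : (fun k => tz (Function.update u i (!u i) k))
        = Function.update (fun k => tz (u k)) i (tz (u i) + 1) := by
      funext k
      by_cases hk : k = i
      · subst hk; simp [tz_not]
      · simp [Function.update_of_ne hk]
    rw [hupd, dotProduct]
    have hfun : (fun k => v k * Function.update (fun k => tz (u k)) i (tz (u i) + 1) k)
        = Function.update (fun k => v k * tz (u k)) i (v i * (tz (u i) + 1)) := by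
      funext k
      by_cases hk : k = i
      · subst hk; simp
      · simp [Function.update_of_ne hk]
    rw [show (∑ k : V₁, v k * Function.update (fun k => tz (u k)) i (tz (u i) + 1) k)
        = ∑ k : V₁, Function.update (fun k => v k * tz (u k)) i (v i * (tz (u i) + 1)) k
      from Finset.sum_congr rfl fun k _ => congrFun hfun k]
    rw [Finset.sum_update_of_mem (Finset.mem_univ i)]
    rw [dotProduct]
    conv_rhs => rw [Finset.sum_eq_sum_sdiff_singleton_add (Finset.mem_univ i)
      (fun k => v k * tz (u k))]
    rw [hv]
    ring
  refine Finset.sum_involution (fun u _ => Function.update u i (!u i)) ?_ ?_ ?_ ?_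
  · intro u _
    rw [key u, χ_add, χ_one]
    ring
  · intro u _ _
    intro h
    have := congrFun h i
    simp at this
  · intro u _; exact Finset.mem_univ _
  · intro u _
    simp [Function.update_idem, Function.update_self, Bool.not_not, Function.update_eq_self]

lemma Hmat_mul_self : Hmat V₁ * Hmat V₁ = ((2 : ℂ) ^ Fintype.card V₁) • 1 := by
  ext a c
  rw [Matrix.mul_apply]
  have : ∀ u : V₁ → Bool, Hmat V₁ a u * Hmat V₁ u c
      = χ (((fun i => tz (a i)) + fun i => tz (c i)) ⬝ᵥ (fun k => tz (u k))) := by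
    intro u
    simp only [Hmat, Matrix.of_apply, ← χ_add, add_dotProduct]
    congr 1
    rw [dotProduct_comm (fun i => tz (u i)) (fun i => tz (c i))]
  simp only [this]
  by_cases hac : a = c
  · subst hac
    have h0 : ((fun i => tz (a i)) + fun i => tz (a i)) = (0 : V₁ → ZMod 2) := by
      funext i; simp [CharTwo.add_self_eq_zero]
    simp [h0, χ_zero, Matrix.smul_apply, Matrix.one_apply, Fintype.card_fun]
  · obtain ⟨i, hi⟩ := Function.ne_iff.mp hac
    rw [sum_χ_eq_zero _ i (tz_add_tz_of_ne hi)]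
    simp [Matrix.smul_apply, Matrix.one_apply, Ne.symm, hac]

lemma Hmat_isUnit_det : IsUnit (Hmat V₁).det := by
  rw [isUnit_iff_ne_zero]
  intro h
  have := congrArg Matrix.det (Hmat_mul_self (V₁ := V₁))
  rw [Matrix.det_mul, h, mul_zero, Matrix.det_smul, Matrix.det_one, mul_one] at this
  exact (pow_ne_zero _ (pow_ne_zero _ (two_ne_zero))) this.symm

lemma zbmap_inj : Function.Injective (fun (w : V₁ → ZMod 2) => fun k => zb (w k)) := by
  intro w w' h
  funext k
  have := congrFun h k
  simpa [tz_zb] using congrArg tz this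

set_option maxHeartbeats 1000000 in
lemma rank_Pmat (C : Matrix V₁ V₂ (ZMod 2)) : (Pmat C).rank = 2 ^ C.rank := by
  classical
  set φ : (V₂ → Bool) → (V₁ → ZMod 2) := fun b => C.mulVec (fun j => tz (b j)) with hφ
  set ψ : (V₂ → Bool) → (V₁ → Bool) := fun b k => zb (φ b k) with hψ
  have hcol : (Pmat C)ᵀ = fun b => Pi.single (ψ b) (1:ℂ) := by
    funext b u
    simp only [Matrix.transpose_apply, Pmat, Matrix.of_apply, Pi.single_apply]
    congr 1
    simp only [eq_iff_iff]
    constructor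
    · intro h
      funext k
      have := congrFun h k
      simpa [zb_tz] using congrArg zb this
    · intro h
      subst h
      funext k
      simp [hψ, hφ, tz_zb]
  rw [Matrix.rank_eq_finrank_span_cols, show (Pmat C).col = _ from hcol]
  have hsingle : (fun u : V₁ → Bool => Pi.single u (1:ℂ)) = ⇑(Pi.basisFun ℂ (V₁ → Bool)) :=
    funext fun u => (Pi.basisFun_apply ℂ (V₁ → Bool) u).symm
  have h1 : LinearIndependent ℂ (fun u : V₁ → Bool => Pi.single u (1:ℂ)) := by
    rw [hsingle]; exact (Pi.basisFun ℂ (V₁ → Bool)).linearIndependent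
  have h2 := h1.comp (Subtype.val : Set.range ψ → (V₁ → Bool)) Subtype.val_injective
  have hrange : Set.range (fun b => Pi.single (ψ b) (1:ℂ))
      = Set.range ((fun u : V₁ → Bool => Pi.single u (1:ℂ)) ∘
          (Subtype.val : Set.range ψ → (V₁ → Bool))) := by
    rw [show (fun b => Pi.single (ψ b) (1:ℂ))
        = (fun u : V₁ → Bool => Pi.single u (1:ℂ)) ∘ ψ from rfl,
      Set.range_comp, Set.range_comp, Subtype.range_coe]
  rw [hrange, finrank_span_eq_card h2]
  rw [← Nat.card_eq_fintype_card]
  have hψcomp : ψ = (fun (w : V₁ → ZMod 2) => fun k => zb (w k)) ∘ φ := rfl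
  rw [hψcomp, Set.range_comp, Nat.card_image_of_injective zbmap_inj]
  have hφcomp : φ = C.mulVec ∘ (fun (b : V₂ → Bool) (j : V₂) => tz (b j)) := rfl
  have htzsurj : Function.Surjective (fun (b : V₂ → Bool) (j : V₂) => tz (b j)) := by
    intro w
    exact ⟨fun j => zb (w j), funext fun j => tz_zb (w j)⟩
  rw [hφcomp, htzsurj.range_comp]
  have hr : Set.range C.mulVec = (LinearMap.range C.mulVecLin : Set (V₁ → ZMod 2)) := by
    rw [LinearMap.coe_range]
    rfl
  rw [hr]
  haveI : Fintype ↥(LinearMap.range C.mulVecLin) := Fintype.ofFinite _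
  rw [Nat.card_eq_fintype_card, Module.card_eq_pow_finrank (K := ZMod 2), ZMod.card]
  rfl

variable {V₁ V₂ : Type*} [Fintype V₁] [Fintype V₂] [DecidableEq V₁] [DecidableEq V₂]

def sgn (x : V₁ ⊕ V₂ → Bool) : Sym2 (V₁ ⊕ V₂) → ℂ :=
  Sym2.lift ⟨fun i j => if x i = true ∧ x j = true then (-1 : ℂ) else 1,
    by intro i j; simp [and_comm]⟩

lemma sgn_ne_zero (x : V₁ ⊕ V₂ → Bool) (e : Sym2 (V₁ ⊕ V₂)) : sgn x e ≠ 0 := by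
  induction e using Sym2.ind with
  | _ u v =>
    simp only [sgn, Sym2.lift_mk]
    split <;> norm_num

def pL : Sym2 (V₁ ⊕ V₂) → Bool :=
  Sym2.lift ⟨fun u v => u.isLeft && v.isLeft, by intro i j; simp [Bool.and_comm]⟩
def pR : Sym2 (V₁ ⊕ V₂) → Bool :=
  Sym2.lift ⟨fun u v => u.isRight && v.isRight, by intro i j; simp [Bool.and_comm]⟩

lemma amp_factor (G : SimpleGraph (V₁ ⊕ V₂)) [DecidableRel G.Adj] :
    ∃ dA : (V₁ → Bool) → ℂ, ∃ dB : (V₂ → Bool) → ℂ,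
      (∀ a, dA a ≠ 0) ∧ (∀ b, dB b ≠ 0) ∧
      ∀ a b, graphStateAmp G (Sum.elim a b) =
        dA a * χ ((fun i => tz (a i)) ⬝ᵥ
          (Matrix.of fun i j => if G.Adj (Sum.inl i) (Sum.inr j) then (1:ZMod 2) else 0).mulVec
            (fun j => tz (b j))) * dB b := by
  classical
  set c : ℂ := ((Real.sqrt 2)⁻¹ : ℂ) ^ (Fintype.card (V₁ ⊕ V₂)) with hc
  have hc0 : c ≠ 0 := by
    apply pow_ne_zero
    simp only [ne_eq, inv_eq_zero, Complex.ofReal_eq_zero]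
    positivity
  refine ⟨fun a => c * ∏ e ∈ G.edgeFinset.filter (fun e => pL e),
      sgn (Sum.elim a (fun _ => false)) e,
    fun b => ∏ e ∈ (G.edgeFinset.filter (fun e => ¬ pL e)).filter (fun e => pR e),
      sgn (Sum.elim (fun _ => false) b) e, ?_, ?_, ?_⟩
  · intro a
    exact mul_ne_zero hc0 (Finset.prod_ne_zero_iff.mpr fun e _ => sgn_ne_zero _ e)
  · intro b
    exact Finset.prod_ne_zero_iff.mpr fun e _ => sgn_ne_zero _ e
  intro a b
  have hamp : graphStateAmp G (Sum.elim a b) = c * ∏ e ∈ G.edgeFinset, sgn (Sum.elim a b) e := rfl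
  rw [hamp]
  rw [← Finset.prod_filter_mul_prod_filter_not G.edgeFinset (fun e => pL e),
    ← Finset.prod_filter_mul_prod_filter_not (G.edgeFinset.filter (fun e => ¬ pL e))
      (fun e => pR e)]
  have h1 : ∏ e ∈ G.edgeFinset.filter (fun e => pL e), sgn (Sum.elim a b) e
      = ∏ e ∈ G.edgeFinset.filter (fun e => pL e), sgn (Sum.elim a (fun _ => false)) e := by
    apply Finset.prod_congr rfl
    intro e he
    have hp : pL e = true := (Finset.mem_filter.mp he).2
    induction e using Sym2.ind with
    | _ u v =>
      simp only [pL, Sym2.lift_mk, Bool.and_eq_true, Sum.isLeft_iff] at hp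
      obtain ⟨⟨i, rfl⟩, ⟨j, rfl⟩⟩ := hp
      simp [sgn, Sym2.lift_mk]
      congr
  have h2 : ∏ e ∈ (G.edgeFinset.filter (fun e => ¬ pL e)).filter (fun e => pR e),
        sgn (Sum.elim a b) e
      = ∏ e ∈ (G.edgeFinset.filter (fun e => ¬ pL e)).filter (fun e => pR e),
        sgn (Sum.elim (fun _ => false) b) e := by
    apply Finset.prod_congr rfl
    intro e he
    have hp : pR e = true := (Finset.mem_filter.mp he).2
    induction e using Sym2.ind with
    | _ u v =>
      simp only [pR, Sym2.lift_mk, Bool.and_eq_true, Sum.isRight_iff] at hp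
      obtain ⟨⟨i, rfl⟩, ⟨j, rfl⟩⟩ := hp
      simp [sgn, Sym2.lift_mk]
      congr
  have h3 : ∏ e ∈ (G.edgeFinset.filter (fun e => ¬ pL e)).filter (fun e => ¬ pR e),
        sgn (Sum.elim a b) e
      = χ ((fun i => tz (a i)) ⬝ᵥ
          (Matrix.of fun i j => if G.Adj (Sum.inl i) (Sum.inr j) then (1:ZMod 2) else 0).mulVec
            (fun j => tz (b j))) := by

    rw [show ((fun i => tz (a i)) ⬝ᵥ
          (Matrix.of fun i j => if G.Adj (Sum.inl i) (Sum.inr j) then (1:ZMod 2) else 0).mulVec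
            (fun j => tz (b j)))
        = ∑ ij ∈ Finset.univ.filter (fun ij : V₁ × V₂ => G.Adj (Sum.inl ij.1) (Sum.inr ij.2)),
            tz (a ij.1) * tz (b ij.2) from by
      simp [Matrix.mulVec, dotProduct, Finset.mul_sum, Finset.sum_filter,
        Fintype.sum_prod_type, mul_ite, ite_mul]]
    rw [χ_sum]
    refine (Finset.prod_bij (fun ij _ => s(Sum.inl ij.1, Sum.inr ij.2)) ?_ ?_ ?_ ?_).symm
    · intro ij hij
      simp only [Finset.mem_filter, Finset.mem_univ, true_and] at hij
      simp only [Finset.mem_filter, SimpleGraph.mem_edgeFinset, SimpleGraph.mem_edgeSet]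
      refine ⟨⟨hij, ?_⟩, ?_⟩ <;> simp [pL, pR, Sym2.lift_mk]
    · intro ij₁ h₁ ij₂ h₂ heq
      simp only [Sym2.eq, Sym2.rel_iff', Prod.mk.injEq, Sum.inl.injEq, Sum.inr.injEq,
        reduceCtorEq, and_false, false_and, or_false, Prod.swap_prod_mk] at heq
      exact Prod.ext heq.1 heq.2
    · intro e he
      induction e using Sym2.ind with
      | _ u v =>
        simp only [Finset.mem_filter, SimpleGraph.mem_edgeFinset, SimpleGraph.mem_edgeSet] at he
        obtain ⟨⟨hE, hnL⟩, hnR⟩ := he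
        rcases u with i | i <;> rcases v with j | j
        · exact absurd (by simp [pL, Sym2.lift_mk]) hnL
        · exact ⟨(i, j), by simpa using hE, rfl⟩
        · exact ⟨(j, i), by simpa using hE.symm, Sym2.eq_swap⟩
        · exact absurd (by simp [pR, Sym2.lift_mk]) hnR
    · intro ij hij
      simp only [sgn, Sym2.lift_mk, Sum.elim_inl, Sum.elim_inr]
      by_cases h1 : a ij.1 = true <;> by_cases h2 : b ij.2 = true <;>
        simp [h1, h2, tz, χ]
  rw [h1, h2, h3]
  ring


theorem main
    {V₁ V₂ : Type*} [Fintype V₁] [Fintype V₂] [DecidableEq V₁] [DecidableEq V₂]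
    (G : SimpleGraph (V₁ ⊕ V₂)) [DecidableRel G.Adj] :
    (Matrix.of fun (a : V₁ → Bool) (b : V₂ → Bool) =>
        graphStateAmp G (Sum.elim a b)).rank =
      2 ^ (Matrix.of fun (i : V₁) (j : V₂) =>
        if G.Adj (Sum.inl i) (Sum.inr j) then (1 : ZMod 2) else 0).rank := by
  classical
  obtain ⟨dA, dB, hdA, hdB, hfac⟩ := amp_factor G
  set C : Matrix V₁ V₂ (ZMod 2) :=
    Matrix.of fun i j => if G.Adj (Sum.inl i) (Sum.inr j) then (1 : ZMod 2) else 0 with hC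
  have hM : (Matrix.of fun (a : V₁ → Bool) (b : V₂ → Bool) =>
      graphStateAmp G (Sum.elim a b))
      = Matrix.diagonal dA * (Hmat V₁ * Pmat C) * Matrix.diagonal dB := by
    ext a b
    rw [Matrix.mul_diagonal, Matrix.diagonal_mul, HP]
    exact hfac a b
  have hdetA : IsUnit (Matrix.diagonal dA).det := by
    rw [Matrix.det_diagonal, isUnit_iff_ne_zero]
    exact Finset.prod_ne_zero_iff.mpr fun a _ => hdA a
  have hdetB : IsUnit (Matrix.diagonal dB).det := by
    rw [Matrix.det_diagonal, isUnit_iff_ne_zero]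
    exact Finset.prod_ne_zero_iff.mpr fun b _ => hdB b
  rw [hM, Matrix.rank_mul_eq_left_of_isUnit_det (Matrix.diagonal dB) _ hdetB,
    Matrix.rank_mul_eq_right_of_isUnit_det (Matrix.diagonal dA) _ hdetA,
    Matrix.rank_mul_eq_right_of_isUnit_det (Hmat V₁) (Pmat C) Hmat_isUnit_det,
    rank_Pmat]

end GraphStateRankProof

/-- For an `n`-qubit graph state `|G⟩` and the bipartition of the vertices
given by a sum type `V₁ ⊕ V₂`, the Schmidt rank of `|G⟩` (the rank of its
coefficient matrix across the bipartition) equals `2^r`, where `r` is the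
rank over `GF(2)` of the `V₁ × V₂` submatrix of the adjacency matrix of `G`. -/
theorem graphState_schmidt_rank_eq_two_pow_cut_rank
    {V₁ V₂ : Type*} [Fintype V₁] [Fintype V₂] [DecidableEq V₁] [DecidableEq V₂]
    (G : SimpleGraph (V₁ ⊕ V₂)) [DecidableRel G.Adj] :
    (Matrix.of fun (a : V₁ → Bool) (b : V₂ → Bool) =>
        graphStateAmp G (Sum.elim a b)).rank =
      2 ^ (Matrix.of fun (i : V₁) (j : V₂) =>
        if G.Adj (Sum.inl i) (Sum.inr j) then (1 : ZMod 2) else 0).rank :=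
  GraphStateRankProof.main G
end
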